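/- On two qubits, R_x² = exp(-i(π/2)σx^tot) commutes with U_yy U_xx, where U_γγ = exp(-iΔt σ_γ⊗σ_γ): (R_x⊗R_x)² U_yy U_xx = U_yy U_xx (R_x⊗R_x)². -/

import Mathlib

open Matrix Kronecker

noncomputable section

def σx : Matrix (Fin 2) (Fin 2) ℂ := !![0, 1; 1, 0]
def σy : Matrix (Fin 2) (Fin 2) ℂ := !![0, -Complex.I; Complex.I, 0]
def σz : Matrix (Fin 2) (Fin 2) ℂ := !![1, 0; 0, -1]

/-- The single-qubit rotation `R_γ = exp(-i(π/4)σ_γ)`. -/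
def R (σ : Matrix (Fin 2) (Fin 2) ℂ) : Matrix (Fin 2) (Fin 2) ℂ :=
  NormedSpace.exp ((-(Real.pi / 4 : ℝ) * Complex.I) • σ)

/-! For an involution `P` the exponential series splits into its even and odd parts,
`exp (z • P) = cosh z • 1 + sinh z • P`, so the π-pulse is `exp (-i(π/2) P) = -i P`.
The two summands of `σx ⊗ 1 + 1 ⊗ σx` are commuting involutions, hence the two-qubit pulse is
`(-i σx ⊗ 1)(-i 1 ⊗ σx) = -(σx ⊗ σx)`, which is also `(R σx)² ⊗ (R σx)²` computed qubit by qubit.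
Finally `σx ⊗ σx` commutes with `σy ⊗ σy`: `σx` and `σy` anticommute on each factor and the two
signs cancel, so the pulse commutes with both `U_xx` and `U_yy`. -/

open NormedSpace

section Involution

variable {𝔸 : Type*} [Ring 𝔸] [Algebra ℂ 𝔸] [TopologicalSpace 𝔸] [IsTopologicalRing 𝔸]
  [ContinuousSMul ℂ 𝔸] [T2Space 𝔸] {P : 𝔸}

theorem exp_smul_of_mul_self_eq_one (hP : P * P = 1) (z : ℂ) :
    exp (z • P) = Complex.cosh z • (1 : 𝔸) + Complex.sinh z • P := by
  have hpow : ∀ n, P ^ (2 * n) = 1 := fun n => by rw [pow_mul, sq, hP, one_pow]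
  rw [exp_eq_tsum ℂ]
  refine HasSum.tsum_eq (HasSum.even_add_odd ?_ ?_)
  · convert (Complex.hasSum_cosh z).smul_const (1 : 𝔸) using 2 with k
    rw [smul_pow, hpow, smul_smul, div_eq_inv_mul]
  · convert (Complex.hasSum_sinh z).smul_const P using 2 with k
    rw [smul_pow, pow_succ P, hpow, one_mul, smul_smul, div_eq_inv_mul]

theorem exp_neg_pi_div_two_mul_I_smul (hP : P * P = 1) :
    exp ((-(Real.pi / 2 : ℝ) * Complex.I) • P) = -Complex.I • P := by
  rw [exp_smul_of_mul_self_eq_one hP, Complex.cosh_mul_I, Complex.sinh_mul_I, Complex.cos_neg,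
    Complex.sin_neg, ← Complex.ofReal_cos, ← Complex.ofReal_sin, Real.cos_pi_div_two,
    Real.sin_pi_div_two]
  simp

end Involution

namespace Matrix

variable {m n α : Type*} [Fintype m] [Fintype n] [CommRing α]

theorem commute_kronecker_of_anticommute {A B : Matrix m m α} {C D : Matrix n n α}
    (hAB : A * B = -(B * A)) (hCD : C * D = -(D * C)) : Commute (A ⊗ₖ C) (B ⊗ₖ D) := by
  rw [Commute, SemiconjBy, ← mul_kronecker_mul, ← mul_kronecker_mul, hAB, hCD,
    ← neg_one_smul α (B * A), ← neg_one_smul α (D * C), smul_kronecker, kronecker_smul, smul_smul,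
    neg_one_mul, neg_neg, one_smul]

variable [DecidableEq m] [DecidableEq n]

theorem kronecker_one_mul_self {A : Matrix m m α} (hA : A * A = 1) :
    A ⊗ₖ (1 : Matrix n n α) * A ⊗ₖ 1 = 1 := by
  rw [← mul_kronecker_mul, hA, one_mul, one_kronecker_one]

theorem one_kronecker_mul_self {B : Matrix n n α} (hB : B * B = 1) :
    (1 : Matrix m m α) ⊗ₖ B * 1 ⊗ₖ B = 1 := by
  rw [← mul_kronecker_mul, hB, one_mul, one_kronecker_one]

theorem commute_kronecker_one_one_kronecker (A : Matrix m m α) (B : Matrix n n α) :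
    Commute (A ⊗ₖ 1) (1 ⊗ₖ B) := by
  simp only [Commute, SemiconjBy, ← mul_kronecker_mul, mul_one, one_mul]

theorem exp_neg_pi_div_two_mul_I_smul_kronecker_one_add_one_kronecker {P : Matrix m m ℂ}
    {Q : Matrix n n ℂ} (hP : P * P = 1) (hQ : Q * Q = 1) :
    exp ((-(Real.pi / 2 : ℝ) * Complex.I) • (P ⊗ₖ 1 + 1 ⊗ₖ Q)) = -(P ⊗ₖ Q) := by
  set c : ℂ := -(Real.pi / 2 : ℝ) * Complex.I
  have hcomm : Commute (c • P ⊗ₖ (1 : Matrix n n ℂ)) (c • (1 : Matrix m m ℂ) ⊗ₖ Q) :=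
    ((commute_kronecker_one_one_kronecker P Q).smul_left c).smul_right c
  rw [smul_add, exp_add_of_commute _ _ hcomm, exp_neg_pi_div_two_mul_I_smul
    (kronecker_one_mul_self hP), exp_neg_pi_div_two_mul_I_smul (one_kronecker_mul_self hQ),
    smul_mul_smul_comm, ← mul_kronecker_mul, mul_one, one_mul]
  simp

end Matrix

theorem σx_mul_self : σx * σx = 1 := by
  ext i j; fin_cases i <;> fin_cases j <;> simp [σx]

theorem σx_mul_σy : σx * σy = -(σy * σx) := by
  ext i j; fin_cases i <;> fin_cases j <;> simp [σx, σy]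

theorem R_σx_mul_self : R σx * R σx = -Complex.I • σx := by
  rw [R, ← Matrix.exp_add_of_commute _ _ (Commute.refl _), ← add_smul,
    ← exp_neg_pi_div_two_mul_I_smul σx_mul_self]
  congr 2
  push_cast
  ring

/-- On two qubits, the π-pulse `R_x² = exp(-i(π/2)σx^tot)` commutes with `U_yy U_xx`, where
`U_γγ = exp(-iΔt σ_γ⊗σ_γ)`. -/
theorem stmt_14 (Δt : ℝ) :
    let Rx2 : Matrix (Fin 2 × Fin 2) (Fin 2 × Fin 2) ℂ :=
      NormedSpace.exp ((-(Real.pi / 2 : ℝ) * Complex.I) • (σx ⊗ₖ (1 : Matrix (Fin 2) (Fin 2) ℂ) + (1 : Matrix (Fin 2) (Fin 2) ℂ) ⊗ₖ σx))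
    let Uxx := NormedSpace.exp ((-(Δt : ℂ) * Complex.I) • (σx ⊗ₖ σx))
    let Uyy := NormedSpace.exp ((-(Δt : ℂ) * Complex.I) • (σy ⊗ₖ σy))
    Rx2 = (R σx ⊗ₖ R σx) * (R σx ⊗ₖ R σx) ∧
    Rx2 * (Uyy * Uxx) = (Uyy * Uxx) * Rx2 := by
  intro Rx2 Uxx Uyy
  have hRx2 : Rx2 = -(σx ⊗ₖ σx) :=
    exp_neg_pi_div_two_mul_I_smul_kronecker_one_add_one_kronecker σx_mul_self σx_mul_self
  have hxx : Commute Rx2 (σx ⊗ₖ σx) := hRx2 ▸ (Commute.refl _).neg_left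
  have hyy : Commute Rx2 (σy ⊗ₖ σy) :=
    hRx2 ▸ (commute_kronecker_of_anticommute σx_mul_σy σx_mul_σy).neg_left
  refine ⟨?_, ((hyy.smul_right _).exp_right.mul_right (hxx.smul_right _).exp_right).eq⟩
  rw [hRx2, ← mul_kronecker_mul, R_σx_mul_self, smul_kronecker, kronecker_smul, smul_smul]
  simp
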